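/- arXiv:2201.07439 — 5 statements merged into one kernel-verified Lean document; each statement's English description precedes it below -/
import Mathlib

section
/- For n ≥ 4 and 2 < k < n, the permutation (n, n-1, ..., k+1, k-1, k-2, ..., 2, 1, k) in S_n is Knuth equivalent to a permutation containing the pattern 4231. -/
/-- One-line notation for an element of `S_n`: a list that is a permutation of `1, …, n`. -/
def IsOneLine (n : ℕ) (w : List ℕ) : Prop :=
  w.Perm ((List.range n).map (· + 1))

/-- `w` and `π` differ by a single elementary Knuth relation (first or second kind,
in either direction). -/
def KnuthStep (w π : List ℕ) : Prop :=
  ∃ u v : List ℕ, ∃ x y z : ℕ, x < y ∧ y < z ∧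
    ((w = u ++ y :: x :: z :: v ∧ π = u ++ y :: z :: x :: v) ∨
     (w = u ++ y :: z :: x :: v ∧ π = u ++ y :: x :: z :: v) ∨
     (w = u ++ x :: z :: y :: v ∧ π = u ++ z :: x :: y :: v) ∨
     (w = u ++ z :: x :: y :: v ∧ π = u ++ x :: z :: y :: v))

/-- Knuth equivalence: the reflexive-transitive closure of elementary Knuth relations. -/
def KnuthEquiv : List ℕ → List ℕ → Prop :=
  Relation.ReflTransGen KnuthStep

/-- `w` contains the pattern `3412`: a subsequence `(a, b, c, d)` with `c < d < a < b`. -/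
def Contains3412 (w : List ℕ) : Prop :=
  ∃ a b c d : ℕ, c < d ∧ d < a ∧ a < b ∧ [a, b, c, d].Sublist w

/-- `w` contains the pattern `4231`: a subsequence `(a, b, c, d)` with `d < b < c < a`. -/
def Contains4231 (w : List ℕ) : Prop :=
  ∃ a b c d : ℕ, d < b ∧ b < c ∧ c < a ∧ [a, b, c, d].Sublist w

/-- The decreasing run `hi, hi - 1, …, lo`. -/
def descFromTo (hi lo : ℕ) : List ℕ :=
  (List.range (hi + 1 - lo)).map (fun i => hi - i)

/-- The increasing run `lo, lo + 1, …, hi`. -/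
def ascFromTo (lo hi : ℕ) : List ℕ :=
  (List.range (hi + 1 - lo)).map (fun i => lo + i)

/-- The length of a longest strictly increasing subsequence of `w`. -/
def lisLen (w : List ℕ) : ℕ :=
  ((w.sublists.filter (fun l => decide (l.IsChain (· < ·)))).map List.length).foldr max 0

/-- The length of a longest strictly decreasing subsequence of `w`. -/
def ldsLen (w : List ℕ) : ℕ :=
  ((w.sublists.filter (fun l => decide (l.IsChain (· > ·)))).map List.length).foldr max 0

/-- The one-line word of the longest element of the Young subgroup attached to a
composition: each consecutive block is reversed.  `s` is the offset already consumed. -/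
def blockRevWord : List ℕ → ℕ → List ℕ
  | [], _ => []
  | m :: rest, s => descFromTo (s + m) (s + 1) ++ blockRevWord rest (s + m)

/-! The word ends in `2, 1, k` with `1 < 2 < k`, so one elementary Knuth relation turns this
tail into `2, k, 1`. Together with the leading letter `n > k`, the letters `n, 2, k, 1` then form
an occurrence of `4231`. -/

theorem mem_descFromTo {hi lo x : ℕ} : x ∈ descFromTo hi lo ↔ lo ≤ x ∧ x ≤ hi := by
  simp only [descFromTo, List.mem_map, List.mem_range]
  constructor
  · rintro ⟨i, hi_lt, rfl⟩
    omega
  · rintro ⟨hlo, hhi⟩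
    exact ⟨hi - x, by omega, by omega⟩

theorem descFromTo_eq_append_singleton {hi lo : ℕ} (h : lo ≤ hi) :
    descFromTo hi lo = descFromTo hi (lo + 1) ++ [lo] := by
  have hlen : hi + 1 - lo = (hi + 1 - (lo + 1)) + 1 := by omega
  rw [descFromTo, hlen, List.range_succ, List.map_append]
  simp only [descFromTo, List.map_cons, List.map_nil]
  congr 2
  omega

theorem knuthStep_append_of_lt {x y z : ℕ} (u : List ℕ) (hxy : x < y) (hyz : y < z) :
    KnuthStep (u ++ [y, x, z]) (u ++ [y, z, x]) :=
  ⟨u, [], x, y, z, hxy, hyz, Or.inl ⟨rfl, rfl⟩⟩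

theorem stmt4_general (n k : ℕ) (hk : 2 < k) (hkn : k < n) :
    ∃ π : List ℕ,
      KnuthEquiv (descFromTo n (k + 1) ++ descFromTo (k - 1) 1 ++ [k]) π ∧
      Contains4231 π := by
  set w := descFromTo n (k + 1) ++ descFromTo (k - 1) 3
  have hword : descFromTo n (k + 1) ++ descFromTo (k - 1) 1 ++ [k] = w ++ [2, 1, k] := by
    rw [descFromTo_eq_append_singleton (by omega : 1 ≤ k - 1),
      descFromTo_eq_append_singleton (by omega : 2 ≤ k - 1)]
    simp [w]
  have hn : n ∈ w := List.mem_append_left _ (mem_descFromTo.2 ⟨by omega, le_rfl⟩)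
  refine ⟨w ++ [2, k, 1], ?_, n, 2, k, 1, one_lt_two, hk, hkn, ?_⟩
  · rw [hword]
    exact .single (knuthStep_append_of_lt w one_lt_two hk)
  · exact (List.singleton_sublist.2 hn).append (List.Sublist.refl [2, k, 1])

theorem stmt4 (n k : ℕ) (hn : 4 ≤ n) (hk : 2 < k) (hkn : k < n) :
    ∃ π : List ℕ,
      KnuthEquiv (descFromTo n (k + 1) ++ descFromTo (k - 1) 1 ++ [k]) π ∧
      Contains4231 π :=
  stmt4_general n k hk hkn
end

section
/- For 1 ≤ i ≤ n, every permutation in S_n that is Knuth equivalent to (i, i-1, ..., 2, 1, i+1, i+2, ..., n) avoids both the pattern 3412 and the pattern 4231. -/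
/-! Being a shuffle of a decreasing word with letters `≤ i` and an increasing word with letters
`> i` is invariant under Knuth moves, and `i ⋯ 1 (i+1) ⋯ n` is such a shuffle. Such a shuffle
avoids `312`: in an occurrence `c a b`, the ascent `a b` forces `b > i` while the descent `c … b`
forces `b ≤ i`. Both `3412` and `4231` contain `312`. -/

/-- Every ascent `p … q` of `w` ends above `i` and every descent ends at or below `i`; that is,
`w` is a shuffle of a decreasing word with letters `≤ i` and an increasing word with letters
`> i`. -/
def IsDecIncShuffle (i : ℕ) (w : List ℕ) : Prop :=
  w.Pairwise fun p q => (p < q → i < q) ∧ (q < p → q ≤ i)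

theorem List.Pairwise.swap_adjacent {α : Type*} {R : α → α → Prop} {u v : List α} {a b : α}
    (h : (u ++ a :: b :: v).Pairwise R) (hba : R b a) : (u ++ b :: a :: v).Pairwise R := by
  simp only [List.pairwise_append, List.pairwise_cons, List.mem_cons] at h ⊢
  grind

theorem isDecIncShuffle_descFromTo_append_ascFromTo (i n : ℕ) :
    IsDecIncShuffle i (descFromTo i 1 ++ ascFromTo (i + 1) n) := by
  simp only [IsDecIncShuffle, descFromTo, ascFromTo, List.pairwise_append, List.pairwise_map,
    List.mem_map, List.mem_range]
  refine ⟨List.pairwise_lt_range.imp_of_mem ?_, List.pairwise_lt_range.imp ?_, ?_⟩ <;> grind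

namespace IsDecIncShuffle

variable {i : ℕ} {w π : List ℕ}

theorem rel_of_sublist (h : IsDecIncShuffle i w) {p q : ℕ} (hpq : [p, q].Sublist w) :
    (p < q → i < q) ∧ (q < p → q ≤ i) :=
  List.pairwise_iff_forall_sublist.mp h hpq

/-- The letters a Knuth move transposes lie on opposite sides of `i`, as the untouched third
letter forces. -/
theorem knuthStep (h : IsDecIncShuffle i w) (hs : KnuthStep w π) : IsDecIncShuffle i π := by
  obtain ⟨u, v, x, y, z, hxy, hyz, ⟨rfl, rfl⟩ | ⟨rfl, rfl⟩ | ⟨rfl, rfl⟩ | ⟨rfl, rfl⟩⟩ := hs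
  · have hx : x ≤ i := (h.rel_of_sublist (p := y) (q := x) (by simp)).2 hxy
    rw [List.append_cons u y] at h ⊢
    exact List.Pairwise.swap_adjacent h ⟨by omega, by omega⟩
  · have hz : i < z := (h.rel_of_sublist (p := y) (q := z) (by simp)).1 hyz
    rw [List.append_cons u y] at h ⊢
    exact List.Pairwise.swap_adjacent h ⟨by omega, by omega⟩
  · have hy : y ≤ i := (h.rel_of_sublist (p := z) (q := y) (by simp)).2 hyz
    exact List.Pairwise.swap_adjacent h ⟨by omega, by omega⟩
  · have hy : i < y := (h.rel_of_sublist (p := x) (q := y) (by simp)).1 hxy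
    exact List.Pairwise.swap_adjacent h ⟨by omega, by omega⟩

theorem knuthEquiv (h : IsDecIncShuffle i w) (hw : KnuthEquiv w π) : IsDecIncShuffle i π := by
  induction hw with
  | refl => exact h
  | tail _ hs ih => exact ih.knuthStep hs

theorem not_sublist_312 (h : IsDecIncShuffle i w) {a b c : ℕ} (hbc : b < c) (hca : c < a) :
    ¬ [a, b, c].Sublist w := by
  intro hs
  have hac := h.rel_of_sublist ((by simp : [a, c].Sublist [a, b, c]).trans hs)
  have hbc := h.rel_of_sublist ((by simp : [b, c].Sublist [a, b, c]).trans hs)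
  omega

theorem not_contains3412 (h : IsDecIncShuffle i w) : ¬ Contains3412 w := by
  rintro ⟨a, b, c, d, hcd, hda, -, hs⟩
  exact h.not_sublist_312 hcd hda ((by simp : [a, c, d].Sublist [a, b, c, d]).trans hs)

theorem not_contains4231 (h : IsDecIncShuffle i w) : ¬ Contains4231 w := by
  rintro ⟨a, b, c, d, -, hbc, hca, hs⟩
  exact h.not_sublist_312 hbc hca ((by simp : [a, b, c].Sublist [a, b, c, d]).trans hs)

end IsDecIncShuffle

theorem stmt6_general (n i : ℕ) (w : List ℕ)
    (hw : KnuthEquiv (descFromTo i 1 ++ ascFromTo (i + 1) n) w) :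
    ¬ Contains3412 w ∧ ¬ Contains4231 w :=
  have h := (isDecIncShuffle_descFromTo_append_ascFromTo i n).knuthEquiv hw
  ⟨h.not_contains3412, h.not_contains4231⟩

theorem stmt6 (n i : ℕ) (hi : 1 ≤ i) (hin : i ≤ n) (w : List ℕ)
    (hw : KnuthEquiv (descFromTo i 1 ++ ascFromTo (i + 1) n) w) :
    ¬ Contains3412 w ∧ ¬ Contains4231 w :=
  stmt6_general n i w hw
end

section
/- A single elementary Knuth relation preserves the length of the longest increasing subsequence: if w and π in S_n differ by one Knuth relation of the first or second kind, then their longest increasing subsequences have equal length. -/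
/-! A Knuth move swaps two adjacent letters `x < z` standing next to a letter `y` with
`x < y < z`. An increasing subsequence never uses both letters of the descent `zx`, so it
survives the swap `zx → xz` unchanged. One that uses the ascent `xz` can trade `x` for the
preceding `y` (in `yxz`), or `z` for the following `y` (in `xzy`): it stays increasing, keeps
its length, and avoids the pair swapped by `xz → zx`. -/

lemma le_lisLen {w l : List ℕ} (hs : l.Sublist w) (hc : l.IsChain (· < ·)) :
    l.length ≤ lisLen w :=
  List.le_max_of_le' 0 (List.mem_map_of_mem (List.mem_filter.2 ⟨List.mem_sublists.2 hs,
    decide_eq_true hc⟩)) le_rfl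

lemma lisLen_le {w : List ℕ} {k : ℕ}
    (h : ∀ l : List ℕ, l.Sublist w → l.IsChain (· < ·) → l.length ≤ k) : lisLen w ≤ k :=
  List.max_le_of_forall_le _ k fun _ hmem => by
    obtain ⟨l, hl, rfl⟩ := List.mem_map.1 hmem
    obtain ⟨hs, hc⟩ := List.mem_filter.1 hl
    exact h l (List.mem_sublists.1 hs) (of_decide_eq_true hc)

lemma List.IsChain.replace_pair {α : Type*} [Preorder α] {l₁ l₃ : List α} {a b a' b' : α}
    (h : (l₁ ++ [a, b] ++ l₃).IsChain (· < ·)) (ha : a ≤ a') (hb : b' ≤ b) (hab : a' < b') :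
    (l₁ ++ [a', b'] ++ l₃).IsChain (· < ·) := by
  simp only [List.isChain_append, List.isChain_pair, List.head?_cons, List.getLast?_append,
    List.getLast?_cons_cons, List.getLast?_singleton, Option.some_or, Option.mem_def,
    Option.some.injEq] at h ⊢
  obtain ⟨⟨hl₁, -, hl₁a⟩, hl₃, hbl₃⟩ := h
  refine ⟨⟨hl₁, hab, ?_⟩, hl₃, ?_⟩
  · rintro p hp _ rfl
    exact (hl₁a p hp a rfl).trans_le ha
  · rintro _ rfl q hq
    exact hb.trans_lt (hbl₃ b rfl q hq)

lemma List.sublist_triple_cases {α : Type*} {a b c : α} {s : List α} (h : s.Sublist [a, b, c]) :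
    s = [] ∨ s = [a] ∨ s = [b] ∨ s = [a, b] ∨ s = [c] ∨ s = [a, c] ∨ s = [b, c] ∨
      s = [a, b, c] := by
  simpa [List.sublists] using List.mem_sublists.2 h

/-- Every increasing subsequence of a word `u ++ m ++ v` can be rerouted through `m'` instead
of `m` without changing its length. -/
def ChainTransfer (m m' : List ℕ) : Prop :=
  ∀ l₁ s l₃ : List ℕ, (l₁ ++ s ++ l₃).IsChain (· < ·) → s.Sublist m →
    ∃ s', s'.Sublist m' ∧ s'.length = s.length ∧ (l₁ ++ s' ++ l₃).IsChain (· < ·)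

lemma lisLen_le_of_chainTransfer (u v : List ℕ) {m m' : List ℕ} (H : ChainTransfer m m') :
    lisLen (u ++ m ++ v) ≤ lisLen (u ++ m' ++ v) := by
  refine lisLen_le fun l hl hc => ?_
  obtain ⟨l₁₂, l₃, rfl, h₁₂, h₃⟩ := List.sublist_append_iff.1 hl
  obtain ⟨l₁, s, rfl, h₁, hs⟩ := List.sublist_append_iff.1 h₁₂
  obtain ⟨s', hs', hlen, hc'⟩ := H l₁ s l₃ hc hs
  calc (l₁ ++ s ++ l₃).length = (l₁ ++ s' ++ l₃).length := by simp [hlen]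
    _ ≤ lisLen (u ++ m' ++ v) := le_lisLen ((h₁.append hs').append h₃) hc'

lemma chainTransfer_swap_of_not_lt {a b : ℕ} (h : ¬a < b) : ChainTransfer [a, b] [b, a] := by
  intro l₁ s l₃ hc hs
  refine ⟨s, ?_, rfl, hc⟩
  obtain rfl | rfl | rfl | rfl : s = [] ∨ s = [a] ∨ s = [b] ∨ s = [a, b] := by
    simpa [List.sublists] using List.mem_sublists.2 hs
  · simp
  · simp
  · simp
  · exact absurd (List.isChain_pair.1 (hc.infix ⟨l₁, l₃, rfl⟩)) h

lemma chainTransfer_of_between_left {a b c : ℕ} (hac : a < c) (hcb : c < b) :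
    ChainTransfer [c, a, b] [c, b, a] := by
  intro l₁ s l₃ hc hs
  have hsc := hc.infix ⟨l₁, l₃, rfl⟩
  rcases List.sublist_triple_cases hs with rfl | rfl | rfl | rfl | rfl | rfl | rfl | rfl
  · exact ⟨[], by simp, rfl, hc⟩
  · exact ⟨[c], by simp, rfl, hc⟩
  · exact ⟨[a], by simp, rfl, hc⟩
  · exact absurd hsc (by simp only [List.isChain_pair]; omega)
  · exact ⟨[b], by simp, rfl, hc⟩
  · exact ⟨[c, b], by simp, rfl, hc⟩
  · exact ⟨[c, b], by simp, rfl, hc.replace_pair hac.le le_rfl hcb⟩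
  · exact absurd hsc (by simp only [List.isChain_cons_cons, List.isChain_singleton]; omega)

lemma chainTransfer_of_between_right {a b c : ℕ} (hac : a < c) (hcb : c < b) :
    ChainTransfer [a, b, c] [b, a, c] := by
  intro l₁ s l₃ hc hs
  have hsc := hc.infix ⟨l₁, l₃, rfl⟩
  rcases List.sublist_triple_cases hs with rfl | rfl | rfl | rfl | rfl | rfl | rfl | rfl
  · exact ⟨[], by simp, rfl, hc⟩
  · exact ⟨[a], by simp, rfl, hc⟩
  · exact ⟨[b], by simp, rfl, hc⟩
  · exact ⟨[a, c], by simp, rfl, hc.replace_pair le_rfl hcb.le hac⟩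
  · exact ⟨[c], by simp, rfl, hc⟩
  · exact ⟨[a, c], by simp, rfl, hc⟩
  · exact absurd hsc (by simp only [List.isChain_pair]; omega)
  · exact absurd hsc (by simp only [List.isChain_cons_cons, List.isChain_singleton]; omega)

lemma lisLen_swap_of_between_left (u v : List ℕ) {a b c : ℕ} (hac : a < c) (hcb : c < b) :
    lisLen (u ++ c :: a :: b :: v) = lisLen (u ++ c :: b :: a :: v) := by
  have hle := lisLen_le_of_chainTransfer u v (chainTransfer_of_between_left hac hcb)
  have hge := lisLen_le_of_chainTransfer (u ++ [c]) v
    (chainTransfer_swap_of_not_lt (show ¬b < a by omega))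
  simp only [List.append_assoc, List.cons_append, List.nil_append] at hle hge
  exact le_antisymm hle hge

lemma lisLen_swap_of_between_right (u v : List ℕ) {a b c : ℕ} (hac : a < c) (hcb : c < b) :
    lisLen (u ++ a :: b :: c :: v) = lisLen (u ++ b :: a :: c :: v) := by
  have hle := lisLen_le_of_chainTransfer u v (chainTransfer_of_between_right hac hcb)
  have hge := lisLen_le_of_chainTransfer u (c :: v)
    (chainTransfer_swap_of_not_lt (show ¬b < a by omega))
  simp only [List.append_assoc, List.cons_append, List.nil_append] at hle hge
  exact le_antisymm hle hge

theorem stmt9_general (w π : List ℕ) (hstep : KnuthStep w π) :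
    lisLen w = lisLen π := by
  obtain ⟨u, v, x, y, z, hxy, hyz, hmove⟩ := hstep
  rcases hmove with ⟨rfl, rfl⟩ | ⟨rfl, rfl⟩ | ⟨rfl, rfl⟩ | ⟨rfl, rfl⟩
  · exact lisLen_swap_of_between_left u v hxy hyz
  · exact (lisLen_swap_of_between_left u v hxy hyz).symm
  · exact lisLen_swap_of_between_right u v hxy hyz
  · exact (lisLen_swap_of_between_right u v hxy hyz).symm

theorem stmt9 (n : ℕ) (w π : List ℕ) (hw : IsOneLine n w)
    (hstep : KnuthStep w π) :
    lisLen w = lisLen π :=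
  stmt9_general w π hstep
end

section
/- For k and i with 1 ≤ i < k ≤ n and k ≤ n, every permutation in S_n Knuth equivalent to (k-1, k-2, ..., i+1, 1, 2, ..., i, k, k+1, ..., n) avoids both the pattern 3412 and the pattern 4231. -/
namespace List

variable {α : Type*} {R : α → α → Prop} {A B : List α} {s t : α}

theorem Pairwise.swap_adjacent_s11 (h : (A ++ s :: t :: B).Pairwise R) (hts : R t s) :
    (A ++ t :: s :: B).Pairwise R := by
  simp only [pairwise_append, pairwise_cons, mem_cons] at h ⊢
  aesop

theorem Pairwise.side_of_adjacent (h : (A ++ s :: t :: B).Pairwise R) {e : α}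
    (he : e ∈ A ++ s :: t :: B) (hs : e ≠ s) (ht : e ≠ t) :
    (R e s ∧ R e t) ∨ (R s e ∧ R t e) := by
  simp only [pairwise_append, pairwise_cons, mem_cons, mem_append] at h he
  aesop

theorem Pairwise.of_append_cons₃ {a b c : α} (h : (A ++ a :: b :: c :: B).Pairwise R) :
    R a b ∧ R a c ∧ R b c := by
  simp only [pairwise_append, pairwise_cons, mem_cons] at h
  aesop

theorem pairwise_range'_of_lt {R : ℕ → ℕ → Prop} {s n : ℕ}
    (h : ∀ a b, s ≤ a → a < b → b < s + n → R a b) : (range' s n).Pairwise R :=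
  (pairwise_lt_range' 1).imp_of_mem fun ha hb hab => by
    rw [mem_range'_1] at ha hb
    exact h _ _ ha.1 hab hb.2

end List

theorem ascFromTo_eq_range' (lo hi : ℕ) : ascFromTo lo hi = List.range' lo (hi + 1 - lo) :=
  List.range'_eq_map_range.symm

theorem descFromTo_eq_reverse_range' (hi lo : ℕ) :
    descFromTo hi lo = (List.range' lo (hi + 1 - lo)).reverse := by
  rw [List.reverse_range']
  exact List.map_congr_left fun x hx => by simp only [List.mem_range] at hx; omega

def OffBlockOrPivot (i k m e : ℕ) : Prop := e < i ∨ e = m ∨ k ≤ e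

def MayPrecede (i k m a b : ℕ) : Prop :=
  a ≠ b ∧ ¬ (i ≤ a ∧ a < b ∧ b < k) ∧
    ¬ (b < a ∧ OffBlockOrPivot i k m a ∧ OffBlockOrPivot i k m b)

structure IsPivot (i k : ℕ) (w : List ℕ) (m : ℕ) : Prop where
  mem : m ∈ w
  le : i ≤ m
  lt : m < k
  pairwise : w.Pairwise (MayPrecede i k m)

namespace IsPivot

variable {i k m y : ℕ} {w : List ℕ} {A B : List ℕ} {s t : ℕ}

theorem not_contains3412_and_not_contains4231 (h : IsPivot i k w m) :
    ¬ Contains3412 w ∧ ¬ Contains4231 w := by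
  constructor <;> rintro ⟨a, b, c, d, h₁, h₂, h₃, hsub⟩ <;>
  · have := h.pairwise.sublist hsub
    simp only [List.pairwise_cons, List.mem_cons, forall_eq_or_imp, List.not_mem_nil,
      List.Pairwise.nil, and_true, MayPrecede, OffBlockOrPivot] at this
    omega

theorem swap (h : IsPivot i k (A ++ s :: t :: B) m) (hts : MayPrecede i k m t s) :
    IsPivot i k (A ++ t :: s :: B) m :=
  ⟨((List.Perm.swap t s B).append_left A).mem_iff.1 h.mem, h.le, h.lt,
    h.pairwise.swap_adjacent_s11 hts⟩

theorem pivot_side (h : IsPivot i k (A ++ s :: t :: B) m) :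
    m = s ∨ m = t ∨ (MayPrecede i k m m s ∧ MayPrecede i k m m t) ∨
      (MayPrecede i k m s m ∧ MayPrecede i k m t m) := by
  by_cases hs : m = s
  · exact .inl hs
  by_cases ht : m = t
  · exact .inr (.inl ht)
  exact .inr (.inr (h.pairwise.side_of_adjacent h.mem hs ht))

theorem rebase (h : IsPivot i k (A ++ s :: t :: B) m)
    (hst : s = m ∧ t = y ∨ s = y ∧ t = m) (hiy : i ≤ y) (hyk : y < k) :
    IsPivot i k (A ++ s :: t :: B) y := by
  obtain ⟨-, him, hmk, hw⟩ := h
  refine ⟨by rcases hst with ⟨-, rfl⟩ | ⟨rfl, -⟩ <;> simp, hiy, hyk, ?_⟩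
  have transfer : ∀ {a b}, a ≠ s → a ≠ t → b ≠ s → b ≠ t →
      MayPrecede i k m a b → MayPrecede i k y a b := by
    intro a b; unfold MayPrecede OffBlockOrPivot; omega
  have before_pair : ∀ {a}, MayPrecede i k m a s → MayPrecede i k m a t →
      MayPrecede i k y a s ∧ MayPrecede i k y a t := by
    intro a; unfold MayPrecede OffBlockOrPivot; omega
  have after_pair : ∀ {b}, MayPrecede i k m s b → MayPrecede i k m t b →
      MayPrecede i k y s b ∧ MayPrecede i k y t b := by
    intro b; unfold MayPrecede OffBlockOrPivot; omega
  simp only [List.pairwise_append, List.pairwise_cons, List.mem_cons, forall_eq_or_imp] at hw ⊢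
  obtain ⟨hA, ⟨⟨hst', hsB⟩, htB, hB⟩, hAB⟩ := hw
  refine ⟨hA.imp_of_mem fun ha hb => transfer (hAB _ ha).1.1 (hAB _ ha).2.1.1
      (hAB _ hb).1.1 (hAB _ hb).2.1.1,
    ⟨⟨?_, fun b hb => (after_pair (hsB b hb) (htB b hb)).1⟩,
      fun b hb => (after_pair (hsB b hb) (htB b hb)).2,
      hB.imp_of_mem fun ha hb => transfer (hsB _ ha).1.symm (htB _ ha).1.symm
        (hsB _ hb).1.symm (htB _ hb).1.symm⟩,
    fun a ha => ⟨(before_pair (hAB a ha).1 (hAB a ha).2.1).1,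
      (before_pair (hAB a ha).1 (hAB a ha).2.1).2,
      fun b hb => transfer (hAB _ ha).1.1 (hAB _ ha).2.1.1
        (hsB _ hb).1.symm (htB _ hb).1.symm ((hAB a ha).2.2 b hb)⟩⟩
  unfold MayPrecede OffBlockOrPivot at hst' ⊢
  omega

variable {u v : List ℕ} {x z : ℕ}

theorem knuthStep_yxz (h : IsPivot i k (u ++ y :: x :: z :: v) m) (hxy : x < y) (hyz : y < z) :
    ∃ m', IsPivot i k (u ++ y :: z :: x :: v) m' := by
  obtain ⟨hyx', hyz', hxz'⟩ := h.pairwise.of_append_cons₃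
  have hm : i ≤ m ∧ m < k := ⟨h.le, h.lt⟩
  have h' : IsPivot i k ((u ++ [y]) ++ x :: z :: v) m := by simpa using h
  by_cases hkeep : MayPrecede i k m z x
  · exact ⟨m, by simpa using h'.swap hkeep⟩
  obtain ⟨rfl, hiy, hyk, hkz⟩ : x = m ∧ i ≤ y ∧ y < k ∧ k ≤ z := by
    have hside := h'.pivot_side
    unfold MayPrecede OffBlockOrPivot at *
    omega
  have hy : IsPivot i k ((u ++ [y]) ++ x :: z :: v) y := by
    simpa using h.rebase (.inr ⟨rfl, rfl⟩) hiy hyk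
  exact ⟨y, by simpa using hy.swap (by unfold MayPrecede OffBlockOrPivot; omega)⟩

theorem knuthStep_yzx (h : IsPivot i k (u ++ y :: z :: x :: v) m) (hxy : x < y) (hyz : y < z) :
    IsPivot i k (u ++ y :: x :: z :: v) m := by
  obtain ⟨hyz', -, -⟩ := h.pairwise.of_append_cons₃
  have h' : IsPivot i k ((u ++ [y]) ++ z :: x :: v) m := by simpa using h
  simpa using h'.swap (by unfold MayPrecede OffBlockOrPivot at *; omega)

theorem knuthStep_xzy (h : IsPivot i k (u ++ x :: z :: y :: v) m) (hxy : x < y) (hyz : y < z) :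
    ∃ m', IsPivot i k (u ++ z :: x :: y :: v) m' := by
  obtain ⟨hxz', hxy', hzy'⟩ := h.pairwise.of_append_cons₃
  have hm : i ≤ m ∧ m < k := ⟨h.le, h.lt⟩
  by_cases hkeep : MayPrecede i k m z x
  · exact ⟨m, h.swap hkeep⟩
  obtain ⟨rfl, hiy, hyk, hxi⟩ : z = m ∧ i ≤ y ∧ y < k ∧ x < i := by
    have hside := h.pivot_side
    unfold MayPrecede OffBlockOrPivot at *
    omega
  have h' : IsPivot i k ((u ++ [x]) ++ z :: y :: v) z := by simpa using h
  have hy : IsPivot i k (u ++ x :: z :: y :: v) y := by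
    simpa using h'.rebase (.inl ⟨rfl, rfl⟩) hiy hyk
  exact ⟨y, hy.swap (by unfold MayPrecede OffBlockOrPivot; omega)⟩

theorem knuthStep_zxy (h : IsPivot i k (u ++ z :: x :: y :: v) m) (hxy : x < y) (hyz : y < z) :
    IsPivot i k (u ++ x :: z :: y :: v) m := by
  obtain ⟨-, -, hxy'⟩ := h.pairwise.of_append_cons₃
  exact h.swap (by unfold MayPrecede OffBlockOrPivot at *; omega)

theorem exists_of_knuthEquiv {π : List ℕ} (h : IsPivot i k w m) (hw : KnuthEquiv w π) :
    ∃ m', IsPivot i k π m' := by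
  induction hw with
  | refl => exact ⟨m, h⟩
  | tail _ hs ih =>
    obtain ⟨m, h⟩ := ih
    obtain ⟨u, v, x, y, z, hxy, hyz, ⟨rfl, rfl⟩ | ⟨rfl, rfl⟩ | ⟨rfl, rfl⟩ | ⟨rfl, rfl⟩⟩ :=
      hs
    · exact h.knuthStep_yxz hxy hyz
    · exact ⟨m, h.knuthStep_yzx hxy hyz⟩
    · exact h.knuthStep_xzy hxy hyz
    · exact ⟨m, h.knuthStep_zxy hxy hyz⟩

end IsPivot

theorem isPivot_base {i k : ℕ} (n : ℕ) (hi : 1 ≤ i) (hik : i < k) :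
    IsPivot i k (descFromTo (k - 1) (i + 1) ++ ascFromTo 1 i ++ ascFromTo k n) i := by
  rw [descFromTo_eq_reverse_range', ascFromTo_eq_range', ascFromTo_eq_range']
  refine ⟨by simp; omega, le_rfl, hik, ?_⟩
  simp only [List.pairwise_append, List.pairwise_reverse, List.mem_append, List.mem_reverse,
    List.mem_range'_1]
  refine ⟨⟨List.pairwise_range'_of_lt ?_, List.pairwise_range'_of_lt ?_, ?_⟩,
    List.pairwise_range'_of_lt ?_, ?_⟩ <;>
  · intros
    unfold MayPrecede OffBlockOrPivot
    omega

theorem stmt11_general (n k i : ℕ) (hi : 1 ≤ i) (hik : i < k)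
    (w : List ℕ)
    (hw : KnuthEquiv (descFromTo (k - 1) (i + 1) ++ ascFromTo 1 i ++ ascFromTo k n) w) :
    ¬ Contains3412 w ∧ ¬ Contains4231 w := by
  obtain ⟨m, hm⟩ := (isPivot_base n hi hik).exists_of_knuthEquiv hw
  exact hm.not_contains3412_and_not_contains4231

theorem stmt11 (n k i : ℕ) (hi : 1 ≤ i) (hik : i < k) (hkn : k ≤ n)
    (w : List ℕ)
    (hw : KnuthEquiv (descFromTo (k - 1) (i + 1) ++ ascFromTo 1 i ++ ascFromTo k n) w) :
    ¬ Contains3412 w ∧ ¬ Contains4231 w :=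
  stmt11_general n k i hi hik w hw
end

section
/- For k ≥ 3, in every permutation Knuth equivalent to the row word of the 2×k rectangular tableau (rows 1..k and k+1..2k), the value k+2 occurs before the value k-1. -/
/-!
Split the letters into a lower row `1, …, k` and an upper row `k + 1, …, 2k`. Every word
Knuth-equivalent to the row word is a shuffle of the two rows, each read in increasing order,
that satisfies the ballot condition: every prefix has at least as many upper letters as lower
ones. Indeed, a Knuth move swaps two adjacent letters `x < z` next to a witness `x < y < z`;
since both rows are read increasingly, `x` must be lower and `z` upper, so the rows are
untouched, and in the two moves that bring the lower letter `x` forward the position of `y`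
shows that the one new prefix is still balanced. In such a word the prefix ending at `k - 1`
contains at least `k - 1` upper letters, hence all of `k + 1, …, 2k - 1`, among them `k + 2`
as soon as `k ≥ 3`.
-/

@[simp]
theorem mem_ascFromTo {a lo hi : ℕ} : a ∈ ascFromTo lo hi ↔ lo ≤ a ∧ a ≤ hi := by
  simp only [ascFromTo, List.mem_map, List.mem_range]
  constructor
  · rintro ⟨i, hi, rfl⟩
    omega
  · intro ha
    exact ⟨a - lo, by omega, by omega⟩

@[simp]
theorem length_ascFromTo (lo hi : ℕ) : (ascFromTo lo hi).length = hi + 1 - lo := by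
  simp [ascFromTo]

@[simp]
theorem getElem_ascFromTo {lo hi i : ℕ} (hi' : i < (ascFromTo lo hi).length) :
    (ascFromTo lo hi)[i] = lo + i := by
  simp [ascFromTo]

theorem pairwise_lt_ascFromTo (lo hi : ℕ) : (ascFromTo lo hi).Pairwise (· < ·) := by
  simpa [ascFromTo, List.pairwise_map] using List.pairwise_lt_range (n := hi + 1 - lo)

theorem List.filter_swap_of_not {α : Type*} {p : α → Bool} {a b : α} (u v : List α)
    (h : ¬(p a ∧ p b)) : (u ++ a :: b :: v).filter p = (u ++ b :: a :: v).filter p := by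
  by_cases ha : p a <;> by_cases hb : p b <;> simp_all

def IsBallot (m : ℕ) (w : List ℕ) : Prop :=
  ∀ n, (w.take n).countP (· ≤ m) ≤ (w.take n).countP (m < ·)

namespace IsBallot

variable {m : ℕ}

theorem countP_le {p s : List ℕ} (h : IsBallot m (p ++ s)) :
    p.countP (· ≤ m) ≤ p.countP (m < ·) := by
  simpa using h p.length

theorem swap {a b : ℕ} {u v : List ℕ} (h : IsBallot m (u ++ a :: b :: v))
    (hb : (u ++ [b]).countP (· ≤ m) ≤ (u ++ [b]).countP (m < ·)) :
    IsBallot m (u ++ b :: a :: v) := by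
  intro n
  rcases le_or_gt n u.length with hn | hn
  · simpa [List.take_append_of_le_length hn] using h n
  obtain ⟨j, rfl⟩ := Nat.exists_eq_add_of_lt hn
  rcases j with _ | j
  · simpa [List.take_length_add_append] using hb
  · have hperm : (u ++ b :: a :: v.take j).Perm (u ++ a :: b :: v.take j) :=
      List.Perm.append_left _ (List.Perm.swap _ _ _)
    have := h (u.length + (j + 1) + 1)
    rw [Nat.add_assoc, List.take_length_add_append] at this ⊢
    simpa [hperm.countP_eq] using this

theorem sublist_of_le {i j : ℕ} {w : List ℕ} (h : IsBallot m w)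
    (hlow : w.filter (· ≤ m) = ascFromTo 1 m)
    (hhigh : w.filter (m < ·) = ascFromTo (m + 1) (2 * m))
    (hi : 1 ≤ i) (hij : i ≤ j) (hj : j ≤ m) : [m + i, j].Sublist w := by
  have hjw : j ∈ w := List.mem_of_mem_filter (p := (· ≤ m)) (by rw [hlow]; simp; omega)
  obtain ⟨p, s, rfl⟩ := List.append_of_mem hjw
  have hpLow : (p.filter (· ≤ m)).length = j - 1 := by
    have hsplit : ascFromTo 1 m = p.filter (· ≤ m) ++ j :: s.filter (· ≤ m) := by
      rw [← hlow]; simp [List.filter_append, hj]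
    have := List.getElem_of_append hsplit rfl
    simp only [getElem_ascFromTo] at this
    omega
  have hball : (p.filter (· ≤ m)).length < (p.filter (m < ·)).length := by
    have := (show IsBallot m ((p ++ [j]) ++ s) by simpa using h).countP_le
    simpa [List.countP_eq_length_filter, hj] using this
  have hsplit : ascFromTo (m + 1) (2 * m) = p.filter (m < ·) ++ s.filter (m < ·) := by
    rw [← hhigh]; simp [List.filter_append, hj]
  have hmem : m + i ∈ p.filter (m < ·) := by
    have hlt : i - 1 < (p.filter (m < ·)).length := by omega
    have := List.getElem_append_left' hlt (s.filter (m < ·))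
    simp only [← hsplit, getElem_ascFromTo] at this
    rw [show m + i = m + 1 + (i - 1) by omega, ← this]
    exact List.getElem_mem hlt
  exact ((List.singleton_sublist.2 (List.mem_of_mem_filter hmem)).append
    (List.Sublist.refl [j])).trans (by simp)

end IsBallot

structure IsBallotShuffle (m : ℕ) (w : List ℕ) : Prop where
  low_pairwise : (w.filter (· ≤ m)).Pairwise (· < ·)
  high_pairwise : (w.filter (m < ·)).Pairwise (· < ·)
  ballot : IsBallot m w

namespace IsBallotShuffle

variable {m : ℕ}

theorem le_lt_of_sublist {a b : ℕ} {w : List ℕ} (h : IsBallotShuffle m w)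
    (hsub : [a, b].Sublist w) (hba : b < a) : b ≤ m ∧ m < a := by
  by_contra hrow
  rcases le_or_gt a m with ha | ha
  · have := h.low_pairwise.sublist (hsub.filter _)
    simp [ha, hba.le.trans ha] at this
    omega
  · have := h.high_pairwise.sublist (hsub.filter _)
    simp [ha, show m < b by omega] at this
    omega

theorem swap {a b : ℕ} {u v : List ℕ} (h : IsBallotShuffle m (u ++ a :: b :: v))
    (hrow : a ≤ m ↔ m < b)
    (hb : (u ++ [b]).countP (· ≤ m) ≤ (u ++ [b]).countP (m < ·)) :
    IsBallotShuffle m (u ++ b :: a :: v) ∧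
      (u ++ b :: a :: v).filter (· ≤ m) = (u ++ a :: b :: v).filter (· ≤ m) ∧
      (u ++ b :: a :: v).filter (m < ·) = (u ++ a :: b :: v).filter (m < ·) := by
  have hlow :=
    (List.filter_swap_of_not (p := (· ≤ m)) (a := a) (b := b) u v (by simp; omega)).symm
  have hhigh :=
    (List.filter_swap_of_not (p := (m < ·)) (a := a) (b := b) u v (by simp; omega)).symm
  exact ⟨⟨hlow ▸ h.low_pairwise, hhigh ▸ h.high_pairwise, h.ballot.swap hb⟩,
    hlow, hhigh⟩

theorem knuthStep {w π : List ℕ} (h : IsBallotShuffle m w) (hstep : KnuthStep w π) :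
    IsBallotShuffle m π ∧ π.filter (· ≤ m) = w.filter (· ≤ m) ∧
      π.filter (m < ·) = w.filter (m < ·) := by
  obtain ⟨u, v, x, y, z, hxy, hyz, hmove⟩ := hstep
  rcases hmove with ⟨rfl, rfl⟩ | ⟨rfl, rfl⟩ | ⟨rfl, rfl⟩ | ⟨rfl, rfl⟩
  · obtain ⟨hx, hy⟩ := h.le_lt_of_sublist (a := y) (b := x) (by simp) hxy
    have h' : IsBallotShuffle m ((u ++ [y]) ++ x :: z :: v) := by simpa using h
    have hb := h'.ballot.countP_le
    simpa using h'.swap (by omega) (by grind)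
  · obtain ⟨hx, hz⟩ := h.le_lt_of_sublist (a := z) (b := x) (by simp) (hxy.trans hyz)
    have hy : m < y := (h.le_lt_of_sublist (a := y) (b := x) (by simp) hxy).2
    have h' : IsBallotShuffle m ((u ++ [y]) ++ z :: x :: v) := by simpa using h
    have hb := h.ballot.countP_le (p := u)
    simpa using h'.swap (by omega) (by grind)
  · obtain ⟨hy, hz⟩ := h.le_lt_of_sublist (a := z) (b := y) (by simp) hyz
    have hb := h.ballot.countP_le (p := u)
    exact h.swap (by omega) (by grind)
  · obtain ⟨hy, hz⟩ := h.le_lt_of_sublist (a := z) (b := y) (by simp) hyz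
    -- balance at the lower letter `y` leaves `u` with a surplus of upper letters
    have hb := (show IsBallot m (u ++ [z, x, y] ++ v) by simpa using h.ballot).countP_le
    exact h.swap (by omega) (by grind)

theorem knuthEquiv {w π : List ℕ} (h : IsBallotShuffle m w) (hπ : KnuthEquiv w π) :
    IsBallotShuffle m π ∧ π.filter (· ≤ m) = w.filter (· ≤ m) ∧
      π.filter (m < ·) = w.filter (m < ·) := by
  induction hπ with
  | refl => exact ⟨h, rfl, rfl⟩
  | tail _ hstep ih =>
    obtain ⟨hπ, hlow, hhigh⟩ := ih
    obtain ⟨hπ', hlow', hhigh'⟩ := hπ.knuthStep hstep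
    exact ⟨hπ', hlow'.trans hlow, hhigh'.trans hhigh⟩

end IsBallotShuffle

theorem isBallot_rowWord (m : ℕ) : IsBallot m (ascFromTo (m + 1) (2 * m) ++ ascFromTo 1 m) := by
  intro n
  set high := ascFromTo (m + 1) (2 * m)
  have hlowHigh : (high.take n).countP (· ≤ m) = 0 :=
    List.countP_eq_zero.2 fun a ha => by simpa using (mem_ascFromTo.1 (List.mem_of_mem_take ha)).1
  have hhighHigh : (high.take n).countP (m < ·) = min n m := by
    rw [List.countP_eq_length.2 fun a ha => by
      simpa using (mem_ascFromTo.1 (List.mem_of_mem_take ha)).1]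
    simp only [List.length_take, length_ascFromTo, high]
    omega
  have hlowLow :=
    List.countP_le_length (p := (· ≤ m)) (l := (ascFromTo 1 m).take (n - high.length))
  simp only [List.take_append, List.countP_append, List.length_take, length_ascFromTo,
    high] at hlowLow hlowHigh hhighHigh ⊢
  omega

theorem isBallotShuffle_rowWord (m : ℕ) :
    IsBallotShuffle m (ascFromTo (m + 1) (2 * m) ++ ascFromTo 1 m) ∧
      (ascFromTo (m + 1) (2 * m) ++ ascFromTo 1 m).filter (· ≤ m) = ascFromTo 1 m ∧
      (ascFromTo (m + 1) (2 * m) ++ ascFromTo 1 m).filter (m < ·) = ascFromTo (m + 1) (2 * m) := by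
  have hlow : (ascFromTo (m + 1) (2 * m) ++ ascFromTo 1 m).filter (· ≤ m) = ascFromTo 1 m := by
    rw [List.filter_append, List.filter_eq_nil_iff.2 (by simp; omega),
      List.filter_eq_self.2 (by simp), List.nil_append]
  have hhigh : (ascFromTo (m + 1) (2 * m) ++ ascFromTo 1 m).filter (m < ·) =
      ascFromTo (m + 1) (2 * m) := by
    rw [List.filter_append, List.filter_eq_self.2 (by simp; omega),
      List.filter_eq_nil_iff.2 (by simp), List.append_nil]
  refine ⟨⟨?_, ?_, isBallot_rowWord m⟩, hlow, hhigh⟩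
  · rw [hlow]; exact pairwise_lt_ascFromTo _ _
  · rw [hhigh]; exact pairwise_lt_ascFromTo _ _

theorem stmt15 (k : ℕ) (hk : 3 ≤ k) (w : List ℕ)
    (hw : KnuthEquiv (ascFromTo (k + 1) (2 * k) ++ ascFromTo 1 k) w) :
    [k + 2, k - 1].Sublist w := by
  obtain ⟨hrow, hrowLow, hrowHigh⟩ := isBallotShuffle_rowWord k
  obtain ⟨hw', hlow, hhigh⟩ := hrow.knuthEquiv hw
  exact hw'.ballot.sublist_of_le (i := 2) (hlow.trans hrowLow) (hhigh.trans hrowHigh)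
    (by norm_num) (by omega) (by omega)
end
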